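/- arXiv:1904.04230 — 3 statements merged into one kernel-verified Lean document; each statement's English description precedes it below -/
import Mathlib

section
/- In the simplex category, for every natural number n ≥ 1 the square formed by the coface maps δ₀ : [n−1] → [n] (top), δₙ : [n−1] → [n] (left), δ_{n+1} : [n] → [n+1] (right) and δ₀ : [n] → [n+1] (bottom) commutes (the simplicial identity δ_{n+1} ∘ δ₀ = δ₀ ∘ δₙ) and is a pushout square in the simplex category. -/
/-!
`⦋m + 2⦌` is `⦋m + 1⦌` glued to itself along `⦋m⦌`, the last `m + 1` vertices of the first copy
being identified with the first `m + 1` of the second. A cocone `(f, g)` satisfies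
`f (i + 1) = g i`, so the induced map is `f` on the first `m + 2` vertices and `g (m + 1)` on the
last one; it is monotone because `f i ≤ f (m + 1) = g m ≤ g (m + 1)`.
-/

open CategoryTheory Limits Simplicial SimplexCategory

namespace Fin

variable {α : Type*} [Preorder α] {n : ℕ}

theorem monotone_snoc {f : Fin n → α} {x : α} (hf : Monotone f) (hx : ∀ i, f i ≤ x) :
    Monotone (snoc f x : Fin (n + 1) → α) := by
  intro a b hab
  induction b using lastCases with
  | last => induction a using lastCases <;> simp [hx]
  | cast b =>
    induction a using lastCases with
    | last => exact absurd hab (not_le.2 (castSucc_lt_last b))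
    | cast a => simpa using hf (castSucc_le_castSucc_iff.1 hab)

end Fin

namespace SimplexCategory

variable {m : ℕ} {X : SimplexCategory}

theorem δ_zero_comp_δ_last :
    δ (0 : Fin (m + 2)) ≫ δ (Fin.last (m + 2)) = δ (Fin.last (m + 1)) ≫ δ 0 := by
  simpa using δ_comp_δ (Fin.zero_le (Fin.last (m + 1)))

section SnocHom

variable {f g : ⦋m + 1⦌ ⟶ X}

theorem toOrderHom_succ_eq_castSucc_of_comp_δ
    (w : δ 0 ≫ f = δ (Fin.last (m + 1)) ≫ g) (i : Fin (m + 1)) :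
    f.toOrderHom i.succ = g.toOrderHom i.castSucc := by
  simpa [δ, Fin.succAbove_last] using congr(Hom.toOrderHom $w i)

theorem toOrderHom_le_last_of_comp_δ
    (w : δ 0 ≫ f = δ (Fin.last (m + 1)) ≫ g) (i : Fin (m + 2)) :
    f.toOrderHom i ≤ g.toOrderHom (Fin.last (m + 1)) :=
  calc f.toOrderHom i ≤ f.toOrderHom (Fin.last m).succ := f.toOrderHom.monotone (Fin.le_last i)
    _ = g.toOrderHom (Fin.last m).castSucc := toOrderHom_succ_eq_castSucc_of_comp_δ w _
    _ ≤ g.toOrderHom (Fin.last (m + 1)) := g.toOrderHom.monotone (Fin.le_last _)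

def snocHom (w : δ 0 ≫ f = δ (Fin.last (m + 1)) ≫ g) : ⦋m + 2⦌ ⟶ X :=
  mkHom ⟨Fin.snoc f.toOrderHom (g.toOrderHom (Fin.last (m + 1))),
    Fin.monotone_snoc f.toOrderHom.monotone (toOrderHom_le_last_of_comp_δ w)⟩

theorem δ_last_comp_snocHom (w : δ 0 ≫ f = δ (Fin.last (m + 1)) ≫ g) :
    δ (Fin.last (m + 2)) ≫ snocHom w = f := by
  ext i : 3
  simp [snocHom, δ, Fin.succAbove_last]

theorem δ_zero_comp_snocHom (w : δ 0 ≫ f = δ (Fin.last (m + 1)) ≫ g) :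
    δ 0 ≫ snocHom w = g := by
  ext i : 3
  induction i using Fin.lastCases with
  | last => simp [snocHom, δ]
  | cast i =>
    change Fin.snoc (α := fun _ => Fin (X.len + 1)) f.toOrderHom _ i.castSucc.succ = _
    rw [Fin.succ_castSucc, Fin.snoc_castSucc]
    exact toOrderHom_succ_eq_castSucc_of_comp_δ w i

end SnocHom

theorem hom_ext_δ_last_δ_zero {h h' : ⦋m + 2⦌ ⟶ X}
    (hl : δ (Fin.last (m + 2)) ≫ h = δ (Fin.last (m + 2)) ≫ h') (h0 : δ 0 ≫ h = δ 0 ≫ h') :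
    h = h' := by
  ext j : 3
  induction j using Fin.lastCases with
  | last => simpa [δ] using congr(Hom.toOrderHom $h0 (Fin.last (m + 1)))
  | cast j => simpa [δ, Fin.succAbove_last] using congr(Hom.toOrderHom $hl j)

theorem isPushout_δ_zero_δ_last :
    IsPushout (δ (0 : Fin (m + 2))) (δ (Fin.last (m + 1))) (δ (Fin.last (m + 2))) (δ 0) :=
  .of_isColimit' ⟨δ_zero_comp_δ_last⟩ <|
    PushoutCocone.IsColimit.mk _ (fun s => snocHom s.condition)
      (fun s => δ_last_comp_snocHom s.condition) (fun s => δ_zero_comp_snocHom s.condition)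
      (fun s _ hl h0 => hom_ext_δ_last_δ_zero (by rw [hl, δ_last_comp_snocHom])
        (by rw [h0, δ_zero_comp_snocHom]))

end SimplexCategory

/-- In the simplex category, for every natural number `n ≥ 1` (written
`n = m + 1`), the square with top `δ 0 : [n-1] ⟶ [n]`, left `δ n : [n-1] ⟶ [n]`,
right `δ (n+1) : [n] ⟶ [n+1]` and bottom `δ 0 : [n] ⟶ [n+1]` commutes
(`δ 0 ≫ δ (n+1) = δ n ≫ δ 0`, i.e. `δ_{n+1} ∘ δ₀ = δ₀ ∘ δₙ`) and is a pushout square. -/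
theorem stmt0 (n m : ℕ) (hn : n = m + 1) :
    (SimplexCategory.δ (0 : Fin (m + 2)) ≫ SimplexCategory.δ (⟨n + 1, by omega⟩ : Fin (m + 3)) =
      SimplexCategory.δ (⟨n, by omega⟩ : Fin (m + 2)) ≫ SimplexCategory.δ (0 : Fin (m + 3))) ∧
    CategoryTheory.IsPushout
      (SimplexCategory.δ (0 : Fin (m + 2)))
      (SimplexCategory.δ (⟨n, by omega⟩ : Fin (m + 2)))
      (SimplexCategory.δ (⟨n + 1, by omega⟩ : Fin (m + 3)))
      (SimplexCategory.δ (0 : Fin (m + 3))) := by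
  subst hn
  exact ⟨δ_zero_comp_δ_last, isPushout_δ_zero_δ_last⟩
end

section
/- Let H ⊗ A be the tensor product algebra ((h⊗a)(y⊗b) = hy ⊗ ab), regard H ⊗ A as a left A-module via a·(y⊗b) = a₍₋₁₎y ⊗ a₍₀₎b, and let N be a left A-module; since this left A-action commutes with right multiplication by H ⊗ A, the space Hom_A(H⊗A, N) of left A-module maps is a left H⊗A-module via ((h⊗a)·ψ)(ξ) = ψ(ξ·(h⊗a)). Then: (i) the formula ((h⊗a)·φ)(x) = a₍₀₎·φ(S⁻¹(a₍₋₁₎) x h) defines a left H⊗A-module structure on Hom_k(H, N); (ii) the map Hom_A(H⊗A, N) → Hom_k(H, N), ψ ↦ (x ↦ ψ(x ⊗ 1_A)), is an isomorphism of left H⊗A-modules. -/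
/-!
# Statement 4

`k` a field, `H` a Hopf algebra over `k` with bijective antipode `S` (inverse `S'`), `A` a left
`H`-comodule algebra with coaction `λ(a) = a₍₋₁₎ ⊗ a₍₀₎`, and `N` a left `A`-module.  `H ⊗ A` is
the tensor product algebra, and a left `A`-module via `a · (y ⊗ b) = a₍₋₁₎ y ⊗ a₍₀₎ b = λ(a) * (y ⊗ b)`.
`Hom_A(H ⊗ A, N)` (encoded by `IsALin`) is a left `H ⊗ A`-module via `(w · ψ)(ξ) = ψ (ξ * w)`.
Then:
(i) `((h ⊗ a) · φ)(x) = a₍₀₎ • φ (S⁻¹(a₍₋₁₎) * x * h)` defines a left `H ⊗ A`-module structure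
on `Hom_k(H, N)` (the action `Theta` below);
(ii) `ψ ↦ (x ↦ ψ (x ⊗ 1_A))` is an isomorphism of left `H ⊗ A`-modules
`Hom_A(H ⊗ A, N) → Hom_k(H, N)`.
-/

open TensorProduct

noncomputable section

variable (k : Type) [Field k]

/-- The curried action of a `k`-algebra `R` on a module `V`, as a `k`-bilinear map. -/
def csmul (R : Type) [Ring R] [Algebra k R] (V : Type) [AddCommGroup V] [Module k V]
    [Module R V] [IsScalarTower k R V] [SMulCommClass k R V] : R →ₗ[k] V →ₗ[k] V where
  toFun r :=
    { toFun := fun v => r • v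
      map_add' := smul_add r
      map_smul' := fun c v => (smul_comm c r v).symm }
  map_add' r r' := LinearMap.ext fun v => add_smul r r' v
  map_smul' c r := LinearMap.ext fun v => smul_assoc c r v

variable (H : Type) [Ring H] [HopfAlgebra k H]

/-- `H ⊗ H →ₗ End_k(H)`, `u ⊗ v ↦ (x ↦ u * x * v)`. -/
def sandwich : H ⊗[k] H →ₗ[k] (H →ₗ[k] H) :=
  (TensorProduct.lift (LinearMap.llcomp k H H H)) ∘ₗ
    (TensorProduct.map (LinearMap.mul k H) (LinearMap.mul k H).flip)

/-- `H ⊗ H →ₗ End_k(Hom_k(H, W))`, `u ⊗ v ↦ (φ ↦ (x ↦ φ (u * x * v)))`. -/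
def sandwichHom (W : Type) [AddCommGroup W] [Module k W] :
    H ⊗[k] H →ₗ[k] (H →ₗ[k] W) →ₗ[k] (H →ₗ[k] W) :=
  (LinearMap.llcomp k H H W).flip ∘ₗ sandwich k H

variable (A : Type) [Ring A] [Algebra k A] (lco : A →ₐ[k] H ⊗[k] A) (S' : H →ₗ[k] H)
variable (N : Type) [AddCommGroup N] [Module k N] [Module A N]
  [IsScalarTower k A N] [SMulCommClass k A N]

/-- `H ⊗ A →ₗ A ⊗ (H ⊗ H)`, `h ⊗ a ↦ a₍₀₎ ⊗ (S⁻¹(a₍₋₁₎) ⊗ h)`. -/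
def coactS' : H ⊗[k] A →ₗ[k] A ⊗[k] (H ⊗[k] H) :=
  (LinearMap.lTensor A (LinearMap.rTensor H S')) ∘ₗ
    (TensorProduct.assoc k A H H).toLinearMap ∘ₗ
    (LinearMap.rTensor H (TensorProduct.comm k H A).toLinearMap) ∘ₗ
    (TensorProduct.comm k H (H ⊗[k] A)).toLinearMap ∘ₗ
    (LinearMap.lTensor H lco.toLinearMap)

/-- The action of `H ⊗ A` on `Hom_k(H, N)`:
`((h ⊗ a) · φ)(x) = a₍₀₎ • φ (S⁻¹(a₍₋₁₎) * x * h)`. -/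
def Theta : (H ⊗[k] A) →ₗ[k] (H →ₗ[k] N) →ₗ[k] (H →ₗ[k] N) :=
  TensorProduct.curry
    ((TensorProduct.lift (csmul k A (H →ₗ[k] N))) ∘ₗ
      (LinearMap.lTensor A (TensorProduct.lift (sandwichHom k H N))) ∘ₗ
      (TensorProduct.assoc k A (H ⊗[k] H) (H →ₗ[k] N)).toLinearMap ∘ₗ
      (LinearMap.rTensor (H →ₗ[k] N) (coactS' k H A lco S')))

/-- The predicate selecting `Hom_A(H ⊗ A, N)` inside `Hom_k(H ⊗ A, N)`, where `A` acts on
`H ⊗ A` by `a · t = λ(a) * t`. -/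
def IsALin (ψ : H ⊗[k] A →ₗ[k] N) : Prop :=
  ∀ (a : A) (t : H ⊗[k] A), ψ (lco a * t) = a • ψ t

/-- The action of `w ∈ H ⊗ A` on `Hom_A(H ⊗ A, N)`: `(w · ψ)(ξ) = ψ (ξ * w)`. -/
def homAct (w : H ⊗[k] A) (ψ : H ⊗[k] A →ₗ[k] N) : H ⊗[k] A →ₗ[k] N :=
  ψ ∘ₗ LinearMap.mulRight k w

/-- The comparison map `Hom_A(H ⊗ A, N) → Hom_k(H, N)`, `ψ ↦ (x ↦ ψ (x ⊗ 1_A))`. -/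
def restr (ψ : H ⊗[k] A →ₗ[k] N) : H →ₗ[k] N :=
  ψ ∘ₗ ((TensorProduct.mk k H A).flip 1)

/-!
The map `coactTensor : A ⊗ H → H ⊗ A`, `a ⊗ x ↦ λ(a) (x ⊗ 1)`, is `A`-linear for left
multiplication on `A ⊗ H`, and it is bijective with inverse `x ⊗ b ↦ b₍₀₎ ⊗ S⁻¹(b₍₋₁₎) x`: after
coassociativity, both composites contract a coproduct through
`h₍₂₎ S⁻¹(h₍₁₎) = ε(h) = S⁻¹(h₍₂₎) h₍₁₎`. Hence `H ⊗ A` is free over `A` on `H ⊗ 1`, and restriction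
to `H ⊗ 1` is a bijection `Hom_A(H ⊗ A, N) → Hom_k(H, N)` with inverse
`φ ↦ (x ⊗ b ↦ b₍₀₎ • φ (S⁻¹(b₍₋₁₎) x))`. Evaluating this inverse at `(x h) ⊗ a` gives the formula
of `Theta`, so `Theta` is the action `ψ ↦ ψ (- * w)` transported along the restriction; in
particular it is an action.
-/

namespace HopfAlgebra

open Coalgebra

variable {R H : Type*} [CommSemiring R] [Semiring H] [HopfAlgebra R H] {S' : H →ₗ[R] H}
  {y : H} {ι : Type*}

lemma sum_right_mul_invAntipode_left (hl : Function.LeftInverse S' (antipode R))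
    (hr : Function.RightInverse S' (antipode R)) (r : Repr R y ι) :
    ∑ i ∈ r.index, r.right i * S' (r.left i) = counit (R := R) y • 1 := by
  apply hl.injective
  simp only [map_sum, map_smul, antipode_one, antipode_mul_antidistrib, hr _]
  exact sum_mul_antipode_eq_smul r

lemma sum_invAntipode_right_mul_left (hl : Function.LeftInverse S' (antipode R))
    (hr : Function.RightInverse S' (antipode R)) (r : Repr R y ι) :
    ∑ i ∈ r.index, S' (r.right i) * r.left i = counit (R := R) y • 1 := by
  apply hl.injective
  simp only [map_sum, map_smul, antipode_one, antipode_mul_antidistrib, hr _]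
  exact sum_antipode_mul_eq_smul r

end HopfAlgebra

section Coaction

open LinearMap

variable {R H : Type*} [CommSemiring R] [Semiring H] [HopfAlgebra R H]

structure IsLeftCoaction {M : Type*} [AddCommMonoid M] [Module R M] (ρ : M →ₗ[R] H ⊗[R] M) :
    Prop where
  coassoc : lTensor H ρ ∘ₗ ρ =
    (TensorProduct.assoc R H H M).toLinearMap ∘ₗ rTensor M Coalgebra.comul ∘ₗ ρ
  counit : (TensorProduct.lid R M).toLinearMap ∘ₗ rTensor M Coalgebra.counit ∘ₗ ρ = LinearMap.id

/-- In Sweedler notation: if `F y₍₁₎ (y₍₂₎ ⊗ m) = ε(y) f(m)`, then `F m₍₋₁₎ (ρ m₍₀₎) = f m`. -/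
lemma IsLeftCoaction.lift_lTensor_apply {M P : Type*} [AddCommMonoid M] [Module R M]
    [AddCommMonoid P] [Module R P] {ρ : M →ₗ[R] H ⊗[R] M} (hρ : IsLeftCoaction ρ)
    (F : H →ₗ[R] H ⊗[R] M →ₗ[R] P) (f : M →ₗ[R] P)
    (hF : ∀ y m, lift F (TensorProduct.assoc R H H M (Coalgebra.comul y ⊗ₜ m))
      = Coalgebra.counit (R := R) y • f m)
    (m : M) : lift F (lTensor H ρ (ρ m)) = f m := by
  have hcontract : lift F ∘ₗ (TensorProduct.assoc R H H M).toLinearMap ∘ₗ rTensor M Coalgebra.comul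
      = f ∘ₗ (TensorProduct.lid R M).toLinearMap ∘ₗ rTensor M Coalgebra.counit := by
    ext y m
    simpa using hF y m
  calc lift F (lTensor H ρ (ρ m))
      = (lift F ∘ₗ (TensorProduct.assoc R H H M).toLinearMap ∘ₗ rTensor M Coalgebra.comul) (ρ m) :=
        congr(lift F ($hρ.coassoc m))
    _ = f m := by rw [hcontract]; exact congr(f ($hρ.counit m))

end Coaction

section ComoduleAlgebra

open LinearMap Coalgebra

variable {R H A : Type*} [CommSemiring R] [Semiring H] [HopfAlgebra R H] [Semiring A]
  [Algebra R A] (ρ : A →ₐ[R] H ⊗[R] A) (S' : H →ₗ[R] H)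

def coactTensor : A ⊗[R] H →ₗ[R] H ⊗[R] A :=
  lift ((mul R (H ⊗[R] A) ∘ₗ ρ.toLinearMap).compl₂ ((TensorProduct.mk R H A).flip 1))

/-- `x ⊗ b ↦ b₍₀₎ ⊗ S'(b₍₋₁₎) x` -/
def coactTensorInv : H ⊗[R] A →ₗ[R] A ⊗[R] H :=
  lift (((mul R (A ⊗[R] H)).flip ∘ₗ TensorProduct.mk R A H 1).compl₂
    ((TensorProduct.comm R H A).toLinearMap ∘ₗ rTensor A S')) ∘ₗ lTensor H ρ.toLinearMap

variable {ρ S'}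

@[simp]
lemma coactTensor_tmul (a : A) (x : H) : coactTensor ρ (a ⊗ₜ x) = ρ a * (x ⊗ₜ 1) := by
  simp [coactTensor]

@[simp]
lemma coactTensorInv_tmul (x : H) (b : A) :
    coactTensorInv ρ S' (x ⊗ₜ b) = TensorProduct.comm R H A (rTensor A S' (ρ b)) * (1 ⊗ₜ x) := by
  simp [coactTensorInv]

lemma coactTensor_mul_one_tmul (t : A ⊗[R] H) (x : H) :
    coactTensor ρ (t * (1 ⊗ₜ x)) = coactTensor ρ t * (x ⊗ₜ 1) := by
  induction t using TensorProduct.induction_on with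
  | zero => simp
  | tmul a y => simp [Algebra.TensorProduct.tmul_mul_tmul, mul_assoc]
  | add t t' ht ht' => simp only [add_mul, map_add, ht, ht']

lemma coactTensorInv_mul_tmul_one (t : H ⊗[R] A) (x : H) :
    coactTensorInv ρ S' (t * (x ⊗ₜ 1)) = coactTensorInv ρ S' t * (1 ⊗ₜ x) := by
  induction t using TensorProduct.induction_on with
  | zero => simp
  | tmul y b => simp [Algebra.TensorProduct.tmul_mul_tmul, mul_assoc]
  | add t t' ht ht' => simp only [add_mul, map_add, ht, ht']

lemma coactTensor_tmul_one_mul (a : A) (t : A ⊗[R] H) :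
    coactTensor ρ ((a ⊗ₜ 1) * t) = ρ a * coactTensor ρ t := by
  induction t using TensorProduct.induction_on with
  | zero => simp
  | tmul b x => simp [Algebra.TensorProduct.tmul_mul_tmul, mul_assoc]
  | add t t' ht ht' => simp only [mul_add, map_add, ht, ht']

lemma coactTensor_comm_rTensor_coact (hρ : IsLeftCoaction ρ.toLinearMap)
    (hl : Function.LeftInverse S' (HopfAlgebra.antipode R))
    (hr : Function.RightInverse S' (HopfAlgebra.antipode R)) (b : A) :
    coactTensor ρ (TensorProduct.comm R H A (rTensor A S' (ρ b))) = 1 ⊗ₜ b := by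
  let F : H →ₗ[R] H ⊗[R] A →ₗ[R] H ⊗[R] A :=
    (mul R (H ⊗[R] A)).flip ∘ₗ (TensorProduct.mk R H A).flip 1 ∘ₗ S'
  have hF : ∀ (y : H) (c : A), lift F (TensorProduct.assoc R H H A (comul y ⊗ₜ c))
      = counit (R := R) y • (1 ⊗ₜ c) := by
    intro y c
    rw [← (ℛ R y).eq, TensorProduct.sum_tmul, map_sum, map_sum]
    simp only [F, TensorProduct.assoc_tmul, lift.tmul, comp_apply, flip_apply,
      TensorProduct.mk_apply, mul_apply', Algebra.TensorProduct.tmul_mul_tmul, mul_one]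
    rw [← TensorProduct.sum_tmul, HopfAlgebra.sum_right_mul_invAntipode_left hl hr,
      TensorProduct.smul_tmul']
  have hlift : ∀ u : H ⊗[R] A, coactTensor ρ (TensorProduct.comm R H A (rTensor A S' u))
      = lift F (lTensor H ρ.toLinearMap u) := by
    intro u
    induction u using TensorProduct.induction_on with
    | zero => simp
    | tmul y c => simp [F]
    | add u u' hu hu' => simp only [map_add, hu, hu']
  rw [hlift]
  exact hρ.lift_lTensor_apply F (TensorProduct.mk R H A 1) hF b

lemma coactTensorInv_coact (hρ : IsLeftCoaction ρ.toLinearMap)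
    (hl : Function.LeftInverse S' (HopfAlgebra.antipode R))
    (hr : Function.RightInverse S' (HopfAlgebra.antipode R)) (a : A) :
    coactTensorInv ρ S' (ρ a) = a ⊗ₜ 1 := by
  refine hρ.lift_lTensor_apply _ ((TensorProduct.mk R A H).flip 1) (fun y c => ?_) a
  rw [← (ℛ R y).eq]
  simp [TensorProduct.sum_tmul, Algebra.TensorProduct.tmul_mul_tmul, ← TensorProduct.tmul_sum,
    HopfAlgebra.sum_invAntipode_right_mul_left hl hr, TensorProduct.tmul_smul]

lemma coactTensor_coactTensorInv (hρ : IsLeftCoaction ρ.toLinearMap)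
    (hl : Function.LeftInverse S' (HopfAlgebra.antipode R))
    (hr : Function.RightInverse S' (HopfAlgebra.antipode R)) (t : H ⊗[R] A) :
    coactTensor ρ (coactTensorInv ρ S' t) = t := by
  induction t using TensorProduct.induction_on with
  | zero => simp
  | tmul x b =>
    rw [coactTensorInv_tmul, coactTensor_mul_one_tmul, coactTensor_comm_rTensor_coact hρ hl hr,
      Algebra.TensorProduct.tmul_mul_tmul, one_mul, mul_one]
  | add t t' ht ht' => simp only [map_add, ht, ht']

lemma coactTensorInv_coactTensor (hρ : IsLeftCoaction ρ.toLinearMap)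
    (hl : Function.LeftInverse S' (HopfAlgebra.antipode R))
    (hr : Function.RightInverse S' (HopfAlgebra.antipode R)) (t : A ⊗[R] H) :
    coactTensorInv ρ S' (coactTensor ρ t) = t := by
  induction t using TensorProduct.induction_on with
  | zero => simp
  | tmul a x =>
    rw [coactTensor_tmul, coactTensorInv_mul_tmul_one, coactTensorInv_coact hρ hl hr,
      Algebra.TensorProduct.tmul_mul_tmul, one_mul, mul_one]
  | add t t' ht ht' => simp only [map_add, ht, ht']

lemma coactTensorInv_coact_mul (hρ : IsLeftCoaction ρ.toLinearMap)
    (hl : Function.LeftInverse S' (HopfAlgebra.antipode R))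
    (hr : Function.RightInverse S' (HopfAlgebra.antipode R)) (a : A) (t : H ⊗[R] A) :
    coactTensorInv ρ S' (ρ a * t) = (a ⊗ₜ 1) * coactTensorInv ρ S' t := by
  conv_lhs => rw [← coactTensor_coactTensorInv hρ hl hr t, ← coactTensor_tmul_one_mul]
  exact coactTensorInv_coactTensor hρ hl hr _

end ComoduleAlgebra

section HomIso

open LinearMap

variable {k H A N}

def extendHom (φ : H →ₗ[k] N) : H ⊗[k] A →ₗ[k] N :=
  lift (csmul k A N) ∘ₗ lTensor A φ ∘ₗ coactTensorInv lco S'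

variable {lco S'}

lemma lift_csmul_lTensor_tmul_one_mul (φ : H →ₗ[k] N) (a : A) (v : A ⊗[k] H) :
    lift (csmul k A N) (lTensor A φ ((a ⊗ₜ 1) * v)) = a • lift (csmul k A N) (lTensor A φ v) := by
  induction v using TensorProduct.induction_on with
  | zero => simp
  | tmul b x => simp [csmul, mul_smul]
  | add v v' hv hv' => simp only [mul_add, map_add, smul_add, hv, hv']

lemma Theta_tmul_apply (h : H) (a : A) (φ : H →ₗ[k] N) (x : H) :
    Theta k H A lco S' N (h ⊗ₜ a) φ x = extendHom lco S' φ ((x * h) ⊗ₜ a) := by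
  simp only [Theta, TensorProduct.curry_apply, comp_apply, rTensor_tmul, coactS',
    LinearEquiv.coe_coe, lTensor_tmul, TensorProduct.comm_tmul, extendHom,
    AlgHom.toLinearMap_apply, coactTensorInv_tmul]
  generalize lco a = u
  induction u using TensorProduct.induction_on with
  | zero => simp
  | tmul y c => simp [sandwichHom, sandwich, csmul]
  | add u u' hu hu' => simp only [map_add, add_tmul, add_mul, LinearMap.add_apply, hu, hu']

lemma isALin_extendHom (hρ : IsLeftCoaction lco.toLinearMap)
    (hl : Function.LeftInverse S' (HopfAlgebra.antipode k))
    (hr : Function.RightInverse S' (HopfAlgebra.antipode k)) (φ : H →ₗ[k] N) :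
    IsALin k H A lco N (extendHom lco S' φ) := by
  intro a t
  simp only [extendHom, comp_apply, coactTensorInv_coact_mul hρ hl hr]
  exact lift_csmul_lTensor_tmul_one_mul φ a _

lemma restr_extendHom (hρ : IsLeftCoaction lco.toLinearMap)
    (hl : Function.LeftInverse S' (HopfAlgebra.antipode k))
    (hr : Function.RightInverse S' (HopfAlgebra.antipode k)) (φ : H →ₗ[k] N) :
    restr k H A N (extendHom lco S' φ) = φ := by
  ext x
  have h : coactTensorInv lco S' (x ⊗ₜ 1) = 1 ⊗ₜ x := by
    simpa using coactTensorInv_coactTensor hρ hl hr (1 ⊗ₜ x)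
  simp [restr, extendHom, h, csmul]

lemma extendHom_restr (hρ : IsLeftCoaction lco.toLinearMap)
    (hl : Function.LeftInverse S' (HopfAlgebra.antipode k))
    (hr : Function.RightInverse S' (HopfAlgebra.antipode k)) {ψ : H ⊗[k] A →ₗ[k] N}
    (hψ : IsALin k H A lco N ψ) : extendHom lco S' (restr k H A N ψ) = ψ := by
  suffices h : ∀ v,
      extendHom lco S' (restr k H A N ψ) (coactTensor lco v) = ψ (coactTensor lco v) by
    refine LinearMap.ext fun t => ?_
    simpa only [coactTensor_coactTensorInv hρ hl hr] using h (coactTensorInv lco S' t)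
  intro v
  rw [extendHom, comp_apply, comp_apply, coactTensorInv_coactTensor hρ hl hr]
  induction v using TensorProduct.induction_on with
  | zero => simp
  | tmul a x => simp [csmul, restr, hψ a]
  | add v v' hv hv' => simp only [map_add, hv, hv']

lemma restr_homAct_extendHom (w : H ⊗[k] A) (φ : H →ₗ[k] N) :
    restr k H A N (homAct k H A N w (extendHom lco S' φ)) = Theta k H A lco S' N w φ := by
  induction w using TensorProduct.induction_on with
  | zero => ext; simp [restr, homAct]
  | tmul h a =>
    ext x
    simp [restr, homAct, Theta_tmul_apply, Algebra.TensorProduct.tmul_mul_tmul]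
  | add w w' hw hw' =>
    rw [map_add, LinearMap.add_apply, ← hw, ← hw']
    ext x
    simp [restr, homAct, mul_add]

lemma isALin_homAct {M : Type} [AddCommGroup M] [Module k M] [Module A M] (w : H ⊗[k] A)
    {ψ : H ⊗[k] A →ₗ[k] M} (hψ : IsALin k H A lco M ψ) :
    IsALin k H A lco M (homAct k H A M w ψ) := fun a t => by
  simpa [homAct, mul_assoc] using hψ a (t * w)

lemma restr_homAct (hρ : IsLeftCoaction lco.toLinearMap)
    (hl : Function.LeftInverse S' (HopfAlgebra.antipode k))
    (hr : Function.RightInverse S' (HopfAlgebra.antipode k)) (w : H ⊗[k] A)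
    {ψ : H ⊗[k] A →ₗ[k] N} (hψ : IsALin k H A lco N ψ) :
    restr k H A N (homAct k H A N w ψ) = Theta k H A lco S' N w (restr k H A N ψ) := by
  conv_lhs => rw [← extendHom_restr hρ hl hr hψ]
  exact restr_homAct_extendHom w _

lemma Theta_mul (hρ : IsLeftCoaction lco.toLinearMap)
    (hl : Function.LeftInverse S' (HopfAlgebra.antipode k))
    (hr : Function.RightInverse S' (HopfAlgebra.antipode k)) (w w' : H ⊗[k] A) :
    Theta k H A lco S' N (w * w') = Theta k H A lco S' N w ∘ₗ Theta k H A lco S' N w' := by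
  ext1 φ
  set ψ := extendHom lco S' φ
  have hmul : homAct k H A N (w * w') ψ = homAct k H A N w (homAct k H A N w' ψ) := by
    ext t
    simp [homAct, mul_assoc]
  calc Theta k H A lco S' N (w * w') φ
      = restr k H A N (homAct k H A N w (homAct k H A N w' ψ)) := by
        rw [← hmul, restr_homAct_extendHom]
    _ = Theta k H A lco S' N w (restr k H A N (homAct k H A N w' ψ)) :=
        restr_homAct hρ hl hr w (isALin_homAct w' (isALin_extendHom hρ hl hr φ))
    _ = Theta k H A lco S' N w (Theta k H A lco S' N w' φ) := by rw [restr_homAct_extendHom]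

lemma Theta_one (hρ : IsLeftCoaction lco.toLinearMap)
    (hl : Function.LeftInverse S' (HopfAlgebra.antipode k))
    (hr : Function.RightInverse S' (HopfAlgebra.antipode k)) :
    Theta k H A lco S' N 1 = LinearMap.id := by
  ext1 φ
  have hone : homAct k H A N 1 (extendHom lco S' φ) = extendHom lco S' φ := by
    ext x
    simp [homAct]
  rw [← restr_homAct_extendHom, hone, id_apply, restr_extendHom hρ hl hr φ]

lemma bijOn_restr (hρ : IsLeftCoaction lco.toLinearMap)
    (hl : Function.LeftInverse S' (HopfAlgebra.antipode k))
    (hr : Function.RightInverse S' (HopfAlgebra.antipode k)) :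
    Set.BijOn (restr k H A N) {ψ | IsALin k H A lco N ψ} Set.univ :=
  Set.InvOn.bijOn (f' := extendHom lco S')
    ⟨fun _ hψ => extendHom_restr hρ hl hr hψ, fun φ _ => restr_extendHom hρ hl hr φ⟩
    (Set.mapsTo_univ _ _) fun φ _ => isALin_extendHom hρ hl hr φ

end HomIso

theorem stmt4
    (hlco_coassoc : (LinearMap.lTensor H lco.toLinearMap) ∘ₗ lco.toLinearMap =
      (TensorProduct.assoc k H H A).toLinearMap ∘ₗ
        (LinearMap.rTensor A Coalgebra.comul) ∘ₗ lco.toLinearMap)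
    (hlco_counit : (TensorProduct.lid k A).toLinearMap ∘ₗ
        (LinearMap.rTensor A Coalgebra.counit) ∘ₗ lco.toLinearMap = LinearMap.id)
    (hS'l : S' ∘ₗ HopfAlgebra.antipode (R := k) = LinearMap.id)
    (hS'r : HopfAlgebra.antipode (R := k) ∘ₗ S' = LinearMap.id) :
    -- (i) the formula defines a left `H ⊗ A`-module structure on `Hom_k(H, N)`
    ((∀ w w' : H ⊗[k] A, Theta k H A lco S' N (w * w') =
        Theta k H A lco S' N w ∘ₗ Theta k H A lco S' N w')
      ∧ Theta k H A lco S' N 1 = LinearMap.id)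
    -- the right-multiplication action preserves `Hom_A(H ⊗ A, N)`
    ∧ (∀ (w : H ⊗[k] A) (ψ : H ⊗[k] A →ₗ[k] N), IsALin k H A lco N ψ →
        IsALin k H A lco N (homAct k H A N w ψ))
    -- (ii) `ψ ↦ (x ↦ ψ (x ⊗ 1))` intertwines the two `H ⊗ A`-module structures …
    ∧ (∀ (w : H ⊗[k] A) (ψ : H ⊗[k] A →ₗ[k] N), IsALin k H A lco N ψ →
        restr k H A N (homAct k H A N w ψ) = Theta k H A lco S' N w (restr k H A N ψ))
    -- … and is a bijection from `Hom_A(H ⊗ A, N)` onto `Hom_k(H, N)`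
    ∧ Set.BijOn (restr k H A N) {ψ | IsALin k H A lco N ψ} Set.univ := by
  have hρ : IsLeftCoaction lco.toLinearMap := ⟨hlco_coassoc, hlco_counit⟩
  have hl : Function.LeftInverse S' (HopfAlgebra.antipode k) := LinearMap.congr_fun hS'l
  have hr : Function.RightInverse S' (HopfAlgebra.antipode k) := LinearMap.congr_fun hS'r
  exact ⟨⟨Theta_mul hρ hl hr, Theta_one hρ hl hr⟩, fun w _ => isALin_homAct w,
    fun w _ => restr_homAct hρ hl hr w, bijOn_restr hρ hl hr⟩
end
end

section
/- Let (M•, d, h) be an S¹-object over (R, σ), and let M•[ε] be the graded R-module with degree-i component Mⁱ ⊕ Mⁱ⁺¹, elements written m₁ + εm₂ (so ε has degree −1). Define D₁(m₁+εm₂) = dm₁ + (1−σ)m₂ − εdm₂, H₁(m₁+εm₂) = εm₁, and D₂(m₁+εm₂) = dm₁ − εdm₂, H₂(m₁+εm₂) = hm₁ + ε(m₁ − hm₂). Then both (M•[ε], D₁, H₁) and (M•[ε], D₂, H₂) are S¹-objects over (R, σ), and the degree-0 R-linear map Φ(m₁+εm₂) = (m₁ + hm₂) + εm₂ is an isomorphism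 satisfying Φ ∘ D₁ = D₂ ∘ Φ and Φ ∘ H₁ = H₂ ∘ Φ, with inverse m₁+εm₂ ↦ (m₁ − hm₂) + εm₂. -/
/-!
Every claim is a componentwise identity on `Mⁱ × Mⁱ⁺¹`. For `(D₁, H₁)` the relations hold
formally: the summand `(1 − σ) m₂` of `D₁` is exactly what makes `D₁H₁ + H₁D₁ = 1 − σ`. For
`(D₂, H₂)` they reduce to the relations of `(d, h)` in each component. `Φ` intertwines the two
structures because `dh + hd = 1 − σ` turns the first component `(1 − σ) m₂ − h d m₂` of `ΦD₁`
into the term `d h m₂` of `D₂Φ`, and `h² = 0` gives `ΦH₁ = H₂Φ`.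
-/

noncomputable section

variable {R : Type} [Ring R]
variable {M : ℤ → Type} [∀ i, AddCommGroup (M i)] [∀ i, Module R (M i)]

/-- Multiplication by a central element `σ`, as an `R`-linear map. -/
def cSmul (σ : R) (hσ : ∀ r : R, σ * r = r * σ) (W : Type) [AddCommGroup W] [Module R W] :
    W →ₗ[R] W where
  toFun w := σ • w
  map_add' := smul_add σ
  map_smul' r w := by
    simp only [RingHom.id_apply]
    rw [smul_smul, hσ, ← smul_smul]

/-- `D₁(m₁ + ε m₂) = d m₁ + (1 − σ) m₂ − ε d m₂`. -/
def D1 (σ : R) (hσ : ∀ r : R, σ * r = r * σ) (d : ∀ i, M i →ₗ[R] M (i + 1)) (i : ℤ) :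
    (M i × M (i + 1)) →ₗ[R] (M (i + 1) × M (i + 1 + 1)) :=
  LinearMap.prod
    (d i ∘ₗ LinearMap.fst R (M i) (M (i + 1)) +
      (LinearMap.id - cSmul σ hσ (M (i + 1))) ∘ₗ LinearMap.snd R (M i) (M (i + 1)))
    (-(d (i + 1) ∘ₗ LinearMap.snd R (M i) (M (i + 1))))

/-- `H₁(m₁ + ε m₂) = ε m₁`. -/
def H1 (i : ℤ) : (M (i + 1) × M (i + 1 + 1)) →ₗ[R] (M i × M (i + 1)) :=
  LinearMap.prod 0 (LinearMap.fst R (M (i + 1)) (M (i + 1 + 1)))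

/-- `D₂(m₁ + ε m₂) = d m₁ − ε d m₂`. -/
def D2 (d : ∀ i, M i →ₗ[R] M (i + 1)) (i : ℤ) :
    (M i × M (i + 1)) →ₗ[R] (M (i + 1) × M (i + 1 + 1)) :=
  LinearMap.prod
    (d i ∘ₗ LinearMap.fst R (M i) (M (i + 1)))
    (-(d (i + 1) ∘ₗ LinearMap.snd R (M i) (M (i + 1))))

/-- `H₂(m₁ + ε m₂) = h m₁ + ε (m₁ − h m₂)`. -/
def H2 (h : ∀ i, M (i + 1) →ₗ[R] M i) (i : ℤ) :
    (M (i + 1) × M (i + 1 + 1)) →ₗ[R] (M i × M (i + 1)) :=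
  LinearMap.prod
    (h i ∘ₗ LinearMap.fst R (M (i + 1)) (M (i + 1 + 1)))
    (LinearMap.fst R (M (i + 1)) (M (i + 1 + 1)) -
      h (i + 1) ∘ₗ LinearMap.snd R (M (i + 1)) (M (i + 1 + 1)))

/-- `Φ(m₁ + ε m₂) = (m₁ + h m₂) + ε m₂`. -/
def Phi (h : ∀ i, M (i + 1) →ₗ[R] M i) (i : ℤ) :
    (M i × M (i + 1)) →ₗ[R] (M i × M (i + 1)) :=
  LinearMap.prod
    (LinearMap.fst R (M i) (M (i + 1)) + h i ∘ₗ LinearMap.snd R (M i) (M (i + 1)))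
    (LinearMap.snd R (M i) (M (i + 1)))

/-- `Ψ(m₁ + ε m₂) = (m₁ − h m₂) + ε m₂` (the claimed inverse of `Φ`). -/
def Psi (h : ∀ i, M (i + 1) →ₗ[R] M i) (i : ℤ) :
    (M i × M (i + 1)) →ₗ[R] (M i × M (i + 1)) :=
  LinearMap.prod
    (LinearMap.fst R (M i) (M (i + 1)) - h i ∘ₗ LinearMap.snd R (M i) (M (i + 1)))
    (LinearMap.snd R (M i) (M (i + 1)))

/-- The action of `σ` on the degree-`i` component of `M[ε]`. -/
def sigmaE (σ : R) (hσ : ∀ r : R, σ * r = r * σ) (i : ℤ) :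
    (M i × M (i + 1)) →ₗ[R] (M i × M (i + 1)) :=
  LinearMap.prodMap (cSmul σ hσ (M i)) (cSmul σ hσ (M (i + 1)))

section Formulas

variable (σ : R) (hσ : ∀ r : R, σ * r = r * σ)
  (d : ∀ i, M i →ₗ[R] M (i + 1)) (h : ∀ i, M (i + 1) →ₗ[R] M i) (i : ℤ)

@[simp]
theorem D1_apply (x : M i × M (i + 1)) :
    D1 σ hσ d i x = (d i x.1 + (x.2 - σ • x.2), -d (i + 1) x.2) :=
  rfl

@[simp]
theorem H1_apply (x : M (i + 1) × M (i + 1 + 1)) : H1 (R := R) i x = (0, x.1) :=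
  rfl

@[simp]
theorem D2_apply (x : M i × M (i + 1)) : D2 d i x = (d i x.1, -d (i + 1) x.2) :=
  rfl

@[simp]
theorem H2_apply (x : M (i + 1) × M (i + 1 + 1)) :
    H2 h i x = (h i x.1, x.1 - h (i + 1) x.2) :=
  rfl

@[simp]
theorem Phi_apply (x : M i × M (i + 1)) : Phi h i x = (x.1 + h i x.2, x.2) :=
  rfl

@[simp]
theorem Psi_apply (x : M i × M (i + 1)) : Psi h i x = (x.1 - h i x.2, x.2) :=
  rfl

@[simp]
theorem sigmaE_apply (x : M i × M (i + 1)) : sigmaE σ hσ i x = σ • x :=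
  rfl

end Formulas

section Relations

variable {σ : R} {hσ : ∀ r : R, σ * r = r * σ}
  {d : ∀ i, M i →ₗ[R] M (i + 1)} {h : ∀ i, M (i + 1) →ₗ[R] M i}

theorem D1_comp_D1 (hd2 : ∀ i, d (i + 1) ∘ₗ d i = 0) (i : ℤ) :
    D1 σ hσ d (i + 1) ∘ₗ D1 σ hσ d i = 0 := by
  ext x <;> simp [← LinearMap.comp_apply, hd2]

theorem H1_comp_H1 (i : ℤ) :
    (H1 i : (M (i + 1) × M (i + 1 + 1)) →ₗ[R] _) ∘ₗ H1 (i + 1) = 0 := by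
  ext <;> simp

theorem D1_comp_H1_add_H1_comp_D1 (i : ℤ) :
    D1 σ hσ d i ∘ₗ H1 i + H1 (i + 1) ∘ₗ D1 σ hσ d (i + 1) = LinearMap.id - sigmaE σ hσ (i + 1) := by
  ext x <;> simp

theorem D2_comp_D2 (hd2 : ∀ i, d (i + 1) ∘ₗ d i = 0) (i : ℤ) :
    D2 d (i + 1) ∘ₗ D2 d i = 0 := by
  ext x <;> simp [← LinearMap.comp_apply, hd2]

theorem H2_comp_H2 (hh2 : ∀ i, h i ∘ₗ h (i + 1) = 0) (i : ℤ) :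
    H2 h i ∘ₗ H2 h (i + 1) = 0 := by
  ext x <;> simp [← LinearMap.comp_apply, hh2]

theorem D2_comp_H2_add_H2_comp_D2
    (hdh : ∀ i (x : M (i + 1)), d i (h i x) + h (i + 1) (d (i + 1) x) = x - σ • x) (i : ℤ) :
    D2 d i ∘ₗ H2 h i + H2 h (i + 1) ∘ₗ D2 d (i + 1) = LinearMap.id - sigmaE σ hσ (i + 1) := by
  ext x <;> simp [hdh]

theorem Phi_comp_D1
    (hdh : ∀ i (x : M (i + 1)), d i (h i x) + h (i + 1) (d (i + 1) x) = x - σ • x) (i : ℤ) :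
    Phi h (i + 1) ∘ₗ D1 σ hσ d i = D2 d i ∘ₗ Phi h i := by
  ext x <;> simp
  case hr.fst =>
    rw [← hdh i x]
    abel

theorem Phi_comp_H1 (hh2 : ∀ i, h i ∘ₗ h (i + 1) = 0) (i : ℤ) :
    Phi h i ∘ₗ H1 i = H2 h i ∘ₗ Phi h (i + 1) := by
  ext x <;> simp [← LinearMap.comp_apply, hh2]

theorem Phi_comp_Psi (i : ℤ) : Phi h i ∘ₗ Psi h i = LinearMap.id := by
  ext <;> simp

theorem Psi_comp_Phi (i : ℤ) : Psi h i ∘ₗ Phi h i = LinearMap.id := by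
  ext <;> simp

end Relations

theorem stmt14 (σ : R) (hσ : ∀ r : R, σ * r = r * σ)
    (d : ∀ i, M i →ₗ[R] M (i + 1)) (h : ∀ i, M (i + 1) →ₗ[R] M i)
    (hd2 : ∀ i, d (i + 1) ∘ₗ d i = 0) (hh2 : ∀ i, h i ∘ₗ h (i + 1) = 0)
    (hdh : ∀ i (x : M (i + 1)), d i (h i x) + h (i + 1) (d (i + 1) x) = x - σ • x) :
    -- `(M[ε], D₁, H₁)` is an S¹-object over `(R, σ)`
    ((∀ i, D1 σ hσ d (i + 1) ∘ₗ D1 σ hσ d i = 0)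
      ∧ (∀ i : ℤ, (H1 i : (M (i+1) × M (i+1+1)) →ₗ[R] _) ∘ₗ H1 (i + 1) = 0)
      ∧ (∀ i, D1 σ hσ d i ∘ₗ H1 i + H1 (i + 1) ∘ₗ D1 σ hσ d (i + 1) =
          LinearMap.id - sigmaE σ hσ (i + 1)))
    -- `(M[ε], D₂, H₂)` is an S¹-object over `(R, σ)`
    ∧ ((∀ i, D2 d (i + 1) ∘ₗ D2 d i = 0)
      ∧ (∀ i, H2 h i ∘ₗ H2 h (i + 1) = 0)
      ∧ (∀ i, D2 d i ∘ₗ H2 h i + H2 h (i + 1) ∘ₗ D2 d (i + 1) =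
          LinearMap.id - sigmaE σ hσ (i + 1)))
    -- `Φ` intertwines the two structures
    ∧ (∀ i, Phi h (i + 1) ∘ₗ D1 σ hσ d i = D2 d i ∘ₗ Phi h i)
    ∧ (∀ i, Phi h i ∘ₗ H1 i = H2 h i ∘ₗ Phi h (i + 1))
    -- and `Φ` is an isomorphism with the stated inverse
    ∧ (∀ i, Phi h i ∘ₗ Psi h i = LinearMap.id)
    ∧ (∀ i, Psi h i ∘ₗ Phi h i = LinearMap.id) :=
  ⟨⟨D1_comp_D1 hd2, H1_comp_H1, D1_comp_H1_add_H1_comp_D1⟩,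
    ⟨D2_comp_D2 hd2, H2_comp_H2 hh2, D2_comp_H2_add_H2_comp_D2 hdh⟩,
    Phi_comp_D1 hdh, Phi_comp_H1 hh2, Phi_comp_Psi, Psi_comp_Phi⟩

end
end
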